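/- arXiv:2306.15148 — 4 statements merged into one kernel-verified Lean document; each statement's English description precedes it below -/
import Mathlib

section
/- Let N > K ≥ 1 with N − K ≥ 1, and consider N qubits: a first star with leaves 0,…,K−2 and center K−1, and a second star with leaves K,…,N−2 and center N−1. Then the caterpillar graph state of central-path length 1, i.e. the result of applying ( ∏_{j=0}^{K−2} CZ_{j,K−1} ) · ( ∏_{j=K}^{N−2} CZ_{j,N−1} ) · CZ_{K−1,N−1} to |+⟩^{⊗N}, equals (1/2)·[ ( |+⟩^{⊗(K−1)}⊗|0⟩ + |−⟩^{⊗(K−1)}⊗|1⟩ ) ⊗ ( |+⟩^{⊗(N−K−1)}⊗|0⟩ ) + ( |+⟩^{⊗(K−1)}⊗|0⟩ − |−⟩^{⊗(K−1)}⊗|1⟩ ) ⊗ ( |−⟩^{⊗(N−K−1)}⊗|1⟩ ) ], where in each star the last tensor factor is its center qubit. -/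
open Finset

/-- The single-qubit computational basis state `|0⟩`. -/
noncomputable def ket0 : Fin 2 → ℂ := fun t => if t = 0 then 1 else 0

/-- The single-qubit computational basis state `|1⟩`. -/
noncomputable def ket1 : Fin 2 → ℂ := fun t => if t = 1 then 1 else 0

/-- The single-qubit state `|+⟩ = (|0⟩ + |1⟩)/√2`. -/
noncomputable def ketP : Fin 2 → ℂ := fun t => (ket0 t + ket1 t) / Real.sqrt 2

/-- The single-qubit state `|−⟩ = (|0⟩ − |1⟩)/√2`. -/
noncomputable def ketM : Fin 2 → ℂ := fun t => (ket0 t - ket1 t) / Real.sqrt 2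

/-- The controlled-Z gate acting on qubits `j` and `k` of an `n`-qubit state:
`(CZ_{j,k} ψ)(x) = (−1)^{x_j · x_k} · ψ(x)`. -/
def CZ {n : ℕ} (j k : Fin n) (ψ : (Fin n → Fin 2) → ℂ) : (Fin n → Fin 2) → ℂ :=
  fun x => (-1 : ℂ) ^ ((x j : ℕ) * (x k : ℕ)) * ψ x

/-- Apply a product of controlled-Z gates, one for each (ordered) pair in the list. -/
def applyCZs {n : ℕ} (es : List (Fin n × Fin n)) (ψ : (Fin n → Fin 2) → ℂ) :
    (Fin n → Fin 2) → ℂ :=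
  es.foldr (fun e acc => CZ e.1 e.2 acc) ψ

/-- The product state of single-qubit states `φ_j`, i.e. `x ↦ ∏_j φ_j(x_j)`. -/
noncomputable def prodState {n : ℕ} (φ : Fin n → Fin 2 → ℂ) : (Fin n → Fin 2) → ℂ :=
  fun x => ∏ j, φ j (x j)

/-!
A CZ gate only multiplies the amplitude at `x` by a sign, and `|+⟩^{⊗N}` has the constant
amplitude `2^{-N/2}`. So the state at `x` is `2^{-N/2}` times `(-1)` to the number of edges
with both ends at `1`. On the other side, once the centers' values `a, b` are fixed each star
is `|+⟩` or `|−⟩` on its leaves, contributing the sign `∏ (-1)^{x_j}` exactly when its center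
is `1`; the four cases for `(a, b)` then agree.
-/

lemma applyCZs_apply {n : ℕ} (es : List (Fin n × Fin n)) (ψ : (Fin n → Fin 2) → ℂ)
    (x : Fin n → Fin 2) :
    applyCZs es ψ x = (es.map fun e => (-1 : ℂ) ^ ((x e.1 : ℕ) * (x e.2 : ℕ))).prod * ψ x := by
  induction es with
  | nil => simp [applyCZs]
  | cons e es ih =>
    change (-1 : ℂ) ^ ((x e.1 : ℕ) * (x e.2 : ℕ)) * applyCZs es ψ x = _
    rw [ih, List.map_cons, List.prod_cons, mul_assoc]

lemma ketP_apply (t : Fin 2) : ketP t = ((√2 : ℝ) : ℂ)⁻¹ := by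
  fin_cases t <;> simp [ketP, ket0, ket1]

lemma ketM_apply (t : Fin 2) : ketM t = (-1) ^ (t : ℕ) * ((√2 : ℝ) : ℂ)⁻¹ := by
  fin_cases t <;> simp [ketM, ket0, ket1, div_eq_mul_inv]

lemma prodState_ketP_apply {n : ℕ} (x : Fin n → Fin 2) :
    prodState (fun _ => ketP) x = ((√2 : ℝ) : ℂ)⁻¹ ^ n := by
  simp [prodState, ketP_apply]

lemma inv_sqrt_two_sq : ((√2 : ℝ) : ℂ)⁻¹ ^ 2 = 1 / 2 := by
  rw [inv_pow, ← Complex.ofReal_pow, Real.sq_sqrt zero_le_two]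
  norm_num

lemma prod_neg_one_pow_mul {m : ℕ} (y : Fin m → Fin 2) (c : ℕ) :
    ∏ j, (-1 : ℂ) ^ ((y j : ℕ) * c) = (∏ j, (-1 : ℂ) ^ (y j : ℕ)) ^ c := by
  simp only [pow_mul, prod_pow]

lemma two_stars_amplitude (a b : Fin 2) (p q s : ℂ) (hs : s ^ 2 = 1 / 2) (m n : ℕ) :
    p ^ (a : ℕ) * q ^ (b : ℕ) * (-1) ^ ((a : ℕ) * (b : ℕ)) * s ^ (m + n + 2) =
      1 / 2 * ((s ^ m * ket0 a + p * s ^ m * ket1 a) * (s ^ n * ket0 b) +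
        (s ^ m * ket0 a - p * s ^ m * ket1 a) * (q * s ^ n * ket1 b)) := by
  rw [pow_add, hs]
  fin_cases a <;> fin_cases b <;> simp [ket0, ket1] <;> ring

/-- The caterpillar graph state of central-path length 1 on `N` qubits (`N > K ≥ 1`,
`N − K ≥ 1`): a star with leaves `0,…,K−2` and center `K−1`, a star with leaves
`K,…,N−2` and center `N−1`, and the centers joined by a CZ gate.  Applying
`(∏_{j<K−1} CZ_{j,K−1}) (∏_{j=K}^{N−2} CZ_{j,N−1}) CZ_{K−1,N−1}` to `|+⟩^{⊗N}` yields
`(1/2)·[(|+⟩^{⊗(K−1)}⊗|0⟩ + |−⟩^{⊗(K−1)}⊗|1⟩) ⊗ (|+⟩^{⊗(N−K−1)}⊗|0⟩)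
 + (|+⟩^{⊗(K−1)}⊗|0⟩ − |−⟩^{⊗(K−1)}⊗|1⟩) ⊗ (|−⟩^{⊗(N−K−1)}⊗|1⟩)]`. -/
theorem caterpillar_path1_state (N K : ℕ) (hK : 1 ≤ K) (hKN : K < N) :
    applyCZs
        (((List.finRange (K - 1)).map fun j : Fin (K - 1) =>
            ((⟨j, by have := j.isLt; omega⟩ : Fin N), (⟨K - 1, by omega⟩ : Fin N))) ++
          ((List.finRange (N - K - 1)).map fun j : Fin (N - K - 1) =>
            ((⟨K + j, by have := j.isLt; omega⟩ : Fin N), (⟨N - 1, by omega⟩ : Fin N))) ++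
          [((⟨K - 1, by omega⟩ : Fin N), (⟨N - 1, by omega⟩ : Fin N))])
        (prodState fun _ => ketP) =
      fun x : Fin N → Fin 2 =>
        (1 / 2 : ℂ) *
          (((∏ j : Fin (K - 1), ketP (x ⟨j, by have := j.isLt; omega⟩)) *
                  ket0 (x ⟨K - 1, by omega⟩) +
                (∏ j : Fin (K - 1), ketM (x ⟨j, by have := j.isLt; omega⟩)) *
                  ket1 (x ⟨K - 1, by omega⟩)) *
              ((∏ j : Fin (N - K - 1), ketP (x ⟨K + j, by have := j.isLt; omega⟩)) *
                ket0 (x ⟨N - 1, by omega⟩)) +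
            ((∏ j : Fin (K - 1), ketP (x ⟨j, by have := j.isLt; omega⟩)) *
                  ket0 (x ⟨K - 1, by omega⟩) -
                (∏ j : Fin (K - 1), ketM (x ⟨j, by have := j.isLt; omega⟩)) *
                  ket1 (x ⟨K - 1, by omega⟩)) *
              ((∏ j : Fin (N - K - 1), ketM (x ⟨K + j, by have := j.isLt; omega⟩)) *
                ket1 (x ⟨N - 1, by omega⟩))) := by
  funext x
  rw [applyCZs_apply, prodState_ketP_apply]
  simp only [List.map_append, List.map_map, List.prod_append, Function.comp_def,
    ← Fin.prod_univ_def, List.map_cons, List.map_nil, List.prod_cons, List.prod_nil, mul_one,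
    prod_neg_one_pow_mul, ketP_apply, ketM_apply, prod_mul_distrib, prod_const, card_univ,
    Fintype.card_fin]
  rw [← two_stars_amplitude _ _ _ _ _ inv_sqrt_two_sq, show K - 1 + (N - K - 1) + 2 = N by omega]
end

section
/- For every l ≥ 2, the number of directed perfect matchings of the central path digraph P^(l) equals twice the number of directed perfect matchings of P^(l−1); that is, the cardinality of { σ : Perm (Fin (l+2)) | ∀ i, P^(l)_{i,σ(i)} ≠ 0 } is 2 times the cardinality of { σ : Perm (Fin (l+1)) | ∀ i, P^(l−1)_{i,σ(i)} ≠ 0 }. -/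
/-!
Row `0` and the last row of `P^(l)` have no zero entries, while the last column vanishes
outside these two rows. Hence a directed perfect matching sends either `0` or the last index
to the last index, and right multiplication by the transposition of `0` and the last index
exchanges the two kinds. Those fixing the last index are exactly the matchings of the
top-left block `P^(l-1)`.
-/

/-- The central path digraph adjacency matrix `P^(l)` (of size `(l+2) × (l+2)`, meaningful
for `l ≥ 1`): `P^(1)` has rows `(1,1,1), (1,1,0), (1,−1,1)`; for `l ≥ 2` the top-left
`(l+1) × (l+1)` block of `P^(l)` is `P^(l−1)`, its last column is `(1,0,…,0,1)ᵀ` and its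
last row is `(1,1,…,1,−1,1)`. -/
def Pmat : (l : ℕ) → Matrix (Fin (l + 2)) (Fin (l + 2)) ℤ
  | 0 => !![1, 1; 1, 1]
  | 1 => !![1, 1, 1; 1, 1, 0; 1, -1, 1]
  | (l + 2) => fun i j =>
      if hi : (i : ℕ) < l + 3 then
        if hj : (j : ℕ) < l + 3 then Pmat (l + 1) ⟨i, hi⟩ ⟨j, hj⟩
        else if (i : ℕ) = 0 then 1 else 0
      else
        if (j : ℕ) = l + 2 then -1 else 1

open Equiv

namespace Equiv.Perm

def fixingLastEquiv (n : ℕ) :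
    Perm (Fin n) ≃ {σ : Perm (Fin (n + 1)) // σ (Fin.last n) = Fin.last n} :=
  ((finSuccAboveEquiv (Fin.last n)).permCongr.trans (Perm.subtypeEquivSubtypePerm _)).trans
    (subtypeEquivRight fun σ => by simp)

theorem fixingLastEquiv_apply_castSucc {n : ℕ} (τ : Perm (Fin n)) (i : Fin n) :
    (fixingLastEquiv n τ).1 i.castSucc = (τ i).castSucc := by
  simp only [fixingLastEquiv, trans_apply, subtypeEquivRight_apply_coe,
    Perm.subtypeEquivSubtypePerm_apply_coe]
  rw [ofSubtype_apply_of_mem (p := (· ≠ Fin.last n)) _ (Fin.castSucc_lt_last i).ne]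
  simp [finSuccAboveEquiv_symm_apply_last, finSuccAboveEquiv_apply]

end Equiv.Perm

namespace Matrix

variable {ι α : Type*} [Zero α]

def IsDirectedPM (M : Matrix ι ι α) (σ : Perm ι) : Prop :=
  ∀ i, M i (σ i) ≠ 0

section Swap

variable [DecidableEq ι] {M : Matrix ι ι α} {σ : Perm ι} {a b : ι}

theorem IsDirectedPM.mul_swap (hσ : M.IsDirectedPM σ) (ha : ∀ j, M a j ≠ 0)
    (hb : ∀ j, M b j ≠ 0) : M.IsDirectedPM (σ * Equiv.swap a b) := by
  intro i
  rcases eq_or_ne i a with rfl | hia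
  · exact ha _
  rcases eq_or_ne i b with rfl | hib
  · exact hb _
  simpa only [Perm.mul_apply, Equiv.swap_apply_of_ne_of_ne hia hib] using hσ i

theorem IsDirectedPM.apply_eq_or_apply_eq (hσ : M.IsDirectedPM σ)
    (hcol : ∀ i, i ≠ a → i ≠ b → M i b = 0) : σ a = b ∨ σ b = b := by
  by_contra! h
  have hpre := hσ (σ.symm b)
  rw [σ.apply_symm_apply] at hpre
  refine hpre (hcol _ (fun h' => h.1 ?_) (fun h' => h.2 ?_)) <;>
    exact (σ.symm_apply_eq.mp h').symm

theorem card_isDirectedPM_eq_two_mul [Fintype ι] (hab : a ≠ b) (ha : ∀ j, M a j ≠ 0)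
    (hb : ∀ j, M b j ≠ 0) (hcol : ∀ i, i ≠ a → i ≠ b → M i b = 0) :
    Nat.card {σ // M.IsDirectedPM σ} = 2 * Nat.card {σ // σ b = b ∧ M.IsDirectedPM σ} := by
  classical
  let swapFixed : {σ // σ b = b ∧ M.IsDirectedPM σ} ≃ {σ // σ b ≠ b ∧ M.IsDirectedPM σ} :=
    { toFun σ := ⟨σ.1 * Equiv.swap a b, by
        rw [Perm.mul_apply, Equiv.swap_apply_right]
        exact fun h => hab (σ.1.injective (h.trans σ.2.1.symm)),
        σ.2.2.mul_swap ha hb⟩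
      invFun σ := ⟨σ.1 * Equiv.swap a b, by
        rw [Perm.mul_apply, Equiv.swap_apply_right]
        exact (σ.2.2.apply_eq_or_apply_eq hcol).resolve_right σ.2.1,
        σ.2.2.mul_swap ha hb⟩
      left_inv σ := by ext : 1; simp [mul_assoc]
      right_inv σ := by ext : 1; simp [mul_assoc] }
  calc Nat.card {σ // M.IsDirectedPM σ}
      = Nat.card ({σ // σ b = b ∧ M.IsDirectedPM σ} ⊕ {σ // σ b ≠ b ∧ M.IsDirectedPM σ}) :=
        Nat.card_congr <| (subtypeEquivRight fun σ => by tauto).trans <|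
          subtypeOrEquiv _ _ fun p hp hq σ hσ => (hq σ hσ).1 (hp σ hσ).1
    _ = 2 * Nat.card {σ // σ b = b ∧ M.IsDirectedPM σ} := by
        rw [Nat.card_sum, ← Nat.card_congr swapFixed, two_mul]

end Swap

section FinLast

variable {n : ℕ}

theorem isDirectedPM_fixingLastEquiv_iff {M : Matrix (Fin (n + 1)) (Fin (n + 1)) α}
    (hlast : M (Fin.last n) (Fin.last n) ≠ 0) (τ : Perm (Fin n)) :
    M.IsDirectedPM (Perm.fixingLastEquiv n τ) ↔
      (M.submatrix Fin.castSucc Fin.castSucc).IsDirectedPM τ := by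
  simp [IsDirectedPM, Fin.forall_fin_succ', Perm.fixingLastEquiv_apply_castSucc,
    (Perm.fixingLastEquiv n τ).2, hlast]

theorem card_isDirectedPM_fixing_last (M : Matrix (Fin (n + 1)) (Fin (n + 1)) α)
    (hlast : M (Fin.last n) (Fin.last n) ≠ 0) :
    Nat.card {σ // σ (Fin.last n) = Fin.last n ∧ M.IsDirectedPM σ} =
      Nat.card {τ // (M.submatrix Fin.castSucc Fin.castSucc).IsDirectedPM τ} :=
  Nat.card_congr <| (subtypeSubtypeEquivSubtypeInter _ (M.IsDirectedPM ·)).symm.trans <|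
    ((Perm.fixingLastEquiv n).subtypeEquiv fun τ =>
      (isDirectedPM_fixingLastEquiv_iff hlast τ).symm).symm

end FinLast

end Matrix

theorem Pmat_zero_apply : ∀ (l : ℕ) (j : Fin (l + 2)), Pmat l 0 j = 1
  | 0, j | 1, j => by fin_cases j <;> rfl
  | l + 2, j => by
    by_cases hj : (j : ℕ) < l + 3
    · simpa [Pmat, hj] using Pmat_zero_apply (l + 1) ⟨j, hj⟩
    · simp [Pmat, hj]

theorem Pmat_submatrix_castSucc (l : ℕ) :
    (Pmat (l + 2)).submatrix Fin.castSucc Fin.castSucc = Pmat (l + 1) := by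
  ext i j
  simp [Matrix.submatrix, Pmat]

theorem Pmat_last_apply_ne_zero (l : ℕ) (j : Fin (l + 4)) : Pmat (l + 2) (Fin.last _) j ≠ 0 := by
  simp only [Pmat, Fin.val_last, lt_irrefl, dite_false]
  split_ifs <;> norm_num

theorem Pmat_apply_last_eq_zero (l : ℕ) (i : Fin (l + 4)) (hi0 : i ≠ 0) (hi : i ≠ Fin.last _) :
    Pmat (l + 2) i (Fin.last _) = 0 := by
  have hlt : (i : ℕ) < l + 3 := Fin.val_lt_last hi
  simp [Pmat, hlt, hi0]

/-- For every `l ≥ 2`, the number of directed perfect matchings of the central path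
digraph `P^(l)` is twice that of `P^(l−1)`. -/
theorem Pmat_directed_PM_card_succ (l : ℕ) (hl : 2 ≤ l) :
    Nat.card {σ : Equiv.Perm (Fin (l + 2)) // ∀ i, Pmat l i (σ i) ≠ 0} =
      2 * Nat.card {σ : Equiv.Perm (Fin (l - 1 + 2)) // ∀ i, Pmat (l - 1) i (σ i) ≠ 0} := by
  obtain ⟨k, rfl⟩ : ∃ k, l = k + 2 := ⟨l - 2, by omega⟩
  change Nat.card {σ // (Pmat (k + 2)).IsDirectedPM σ} =
    2 * Nat.card {σ // (Pmat (k + 1)).IsDirectedPM σ}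
  rw [Matrix.card_isDirectedPM_eq_two_mul (a := 0) (b := Fin.last _) Fin.last_pos.ne
      (by simp [Pmat_zero_apply]) (Pmat_last_apply_ne_zero k) (Pmat_apply_last_eq_zero k),
    Matrix.card_isDirectedPM_fixing_last _ (Pmat_last_apply_ne_zero k _), Pmat_submatrix_castSucc]
end

section
/- For every l ≥ 1, the number of directed perfect matchings of the central path digraph P^(l) equals 2^{l+1}; that is, the cardinality of { σ : Perm (Fin (l+2)) | ∀ i, P^(l)_{i,σ(i)} ≠ 0 } is 2^{l+1}. -/
/-!
`P^(l)_{ij}` vanishes exactly when `0 < i < j`, so the directed perfect matchings are the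
permutations with `σ i ≤ i` for every `i ≠ 0`. In such a permutation the last index can only be
the image of itself or of `0`. Writing `σ = swap last p * τ` with `τ` fixing the last index,
`σ` is of this kind iff `τ` is and `p` is either `last` or `τ 0`; so each new index doubles the
count.
-/

open Equiv

namespace Equiv.Perm

def decomposeFinLast {n : ℕ} : Perm (Fin (n + 1)) ≃ Fin (n + 1) × Perm (Fin n) :=
  ((permCongr finSuccEquivLast).trans decomposeOption).trans
    (prodCongr finSuccEquivLast.symm (Equiv.refl _))

@[simp]
theorem decomposeFinLast_symm_apply_last {n : ℕ} (p : Fin (n + 1)) (e : Perm (Fin n)) :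
    decomposeFinLast.symm (p, e) (Fin.last n) = p := by
  simp [decomposeFinLast]

@[simp]
theorem decomposeFinLast_symm_apply_castSucc {n : ℕ} (p : Fin (n + 1)) (e : Perm (Fin n))
    (x : Fin n) : decomposeFinLast.symm (p, e) x.castSucc = swap (Fin.last n) p (e x).castSucc := by
  refine Fin.lastCases ?_ (fun i => ?_) p
  · simp [decomposeFinLast]
  · by_cases h : i = e x
    · simp [h, decomposeFinLast]
    · simp [decomposeFinLast, swap_apply_def, Ne.symm h]

end Equiv.Perm

theorem Pmat_eq_zero_iff (l : ℕ) (i j : Fin (l + 2)) : Pmat l i j = 0 ↔ i ≠ 0 ∧ i < j := by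
  rw [Fin.ne_iff_vne, Fin.val_zero, Fin.lt_def]
  induction l using Nat.twoStepInduction with
  | zero => fin_cases i <;> fin_cases j <;> decide
  | one => fin_cases i <;> fin_cases j <;> decide
  | more l _ ih =>
    rw [Pmat]
    by_cases hi : (i : ℕ) < l + 3
    · by_cases hj : (j : ℕ) < l + 3
      · simpa [hi, hj] using ih ⟨i, hi⟩ ⟨j, hj⟩
      · simp only [hi, hj, dite_true, dite_false]
        split_ifs <;> omega
    · simp only [hi, dite_false]
      split_ifs <;> simp only [one_ne_zero, false_iff] <;> omega

def IsLowerOffZero {n : ℕ} (σ : Perm (Fin (n + 1))) : Prop :=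
  ∀ i, i ≠ 0 → σ i ≤ i

theorem isLowerOffZero_decomposeFinLast_symm_iff {n : ℕ} (p : Fin (n + 2))
    (τ : Perm (Fin (n + 1))) :
    IsLowerOffZero (Perm.decomposeFinLast.symm (p, τ)) ↔
      IsLowerOffZero τ ∧ (p = Fin.last _ ∨ p = (τ 0).castSucc) := by
  unfold IsLowerOffZero
  set σ := Perm.decomposeFinLast.symm (p, τ)
  have hσ : p = Fin.last _ ∨ p = (τ 0).castSucc → ∀ j ≠ 0, σ j.castSucc = (τ j).castSucc := by
    intro hp j hj
    refine (Perm.decomposeFinLast_symm_apply_castSucc p τ j).trans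
      (swap_apply_of_ne_of_ne (Fin.castSucc_lt_last _).ne ?_)
    rcases hp with rfl | rfl
    · exact (Fin.castSucc_lt_last _).ne
    · exact Fin.castSucc_injective _ |>.ne (τ.injective.ne hj)
  constructor
  · intro h
    have hp : p = Fin.last _ ∨ p = (τ 0).castSucc := by
      by_contra! hp
      obtain ⟨k, rfl⟩ := Fin.exists_castSucc_eq.mpr hp.1
      -- the row `τ⁻¹ k` of `σ` would have its entry in the last column
      have hk : τ.symm k ≠ 0 := fun h => hp.2 (by rw [← h, τ.apply_symm_apply])
      have := h _ (Fin.castSucc_ne_zero_iff.mpr hk)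
      rw [Perm.decomposeFinLast_symm_apply_castSucc, τ.apply_symm_apply, swap_apply_right] at this
      exact (Fin.castSucc_lt_last _).not_ge this
    refine ⟨fun j hj => ?_, hp⟩
    have := h j.castSucc (Fin.castSucc_ne_zero_iff.mpr hj)
    rwa [hσ hp j hj, Fin.castSucc_le_castSucc_iff] at this
  · rintro ⟨hτ, hp⟩ i hi
    induction i using Fin.lastCases with
    | last => exact Fin.le_last _
    | cast j =>
      have hj := Fin.castSucc_ne_zero_iff.mp hi
      rw [hσ hp j hj, Fin.castSucc_le_castSucc_iff]
      exact hτ j hj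

def subtypeProdEqOrEquiv {α β : Type*} [DecidableEq α] (Q : β → Prop) (f g : β → α)
    (hfg : ∀ b, f b ≠ g b) :
    {x : α × β // Q x.2 ∧ (x.1 = f x.2 ∨ x.1 = g x.2)} ≃ Bool × {b // Q b} where
  toFun x := (decide (x.1.1 = f x.1.2), ⟨x.1.2, x.2.1⟩)
  invFun y := ⟨(if y.1 then f y.2 else g y.2, y.2), y.2.2, by cases y.1 <;> simp⟩
  left_inv := by
    rintro ⟨⟨a, b⟩, hb, ha | ha⟩ <;> dsimp only at ha <;> subst ha <;> simp [(hfg b).symm]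
  right_inv := by
    rintro ⟨_ | _, b, hb⟩ <;> simp [(hfg b).symm]

def isLowerOffZeroSuccEquiv (n : ℕ) :
    {σ : Perm (Fin (n + 2)) // IsLowerOffZero σ} ≃
      Bool × {τ : Perm (Fin (n + 1)) // IsLowerOffZero τ} :=
  (Perm.decomposeFinLast.symm.subtypeEquiv fun x =>
      (isLowerOffZero_decomposeFinLast_symm_iff x.1 x.2).symm).symm.trans
    (subtypeProdEqOrEquiv IsLowerOffZero (fun _ => Fin.last _) (fun τ => (τ 0).castSucc)
      fun _ => (Fin.castSucc_lt_last _).ne')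

theorem card_isLowerOffZero (n : ℕ) :
    Nat.card {σ : Perm (Fin (n + 1)) // IsLowerOffZero σ} = 2 ^ n := by
  induction n with
  | zero =>
    exact Nat.card_eq_one_iff_exists.mpr
      ⟨⟨1, fun i hi => (hi i.eq_zero).elim⟩,
        fun σ => Subtype.ext (Equiv.ext fun i => Subsingleton.elim (α := Fin 1) _ _)⟩
  | succ n ih =>
    rw [Nat.card_congr (isLowerOffZeroSuccEquiv n), Nat.card_prod, ih,
      Nat.card_eq_fintype_card, Fintype.card_bool, pow_succ']

theorem Pmat_directed_PM_card_general (l : ℕ) :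
    Nat.card {σ : Equiv.Perm (Fin (l + 2)) // ∀ i, Pmat l i (σ i) ≠ 0} = 2 ^ (l + 1) := by
  have h (σ : Perm (Fin (l + 2))) : (∀ i, Pmat l i (σ i) ≠ 0) ↔ IsLowerOffZero σ :=
    forall_congr' fun i => by rw [Ne, Pmat_eq_zero_iff, not_and, not_lt]
  rw [Nat.card_congr (subtypeEquivRight h)]
  exact card_isLowerOffZero (l + 1)

/-- For every `l ≥ 1`, the central path digraph `P^(l)` has exactly `2^(l+1)` directed
perfect matchings. -/
theorem Pmat_directed_PM_card (l : ℕ) (hl : 1 ≤ l) :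
    Nat.card {σ : Equiv.Perm (Fin (l + 2)) // ∀ i, Pmat l i (σ i) ≠ 0} = 2 ^ (l + 1) :=
  Pmat_directed_PM_card_general l
end

section
/- (The GHZ sculpting digraph has exactly two directed perfect matchings.) Let N ≥ 2. The permutations σ of ZMod N satisfying σ(i) ∈ {i, i+1} for every i ∈ ZMod N are exactly the identity permutation and the translation i ↦ i + 1; in particular, there are exactly 2 such permutations. -/
/-!
If a permutation `σ` with `σ x ∈ {x, x + a}` for all `x` sends some `x` to `x + a`, it cannot
fix `x + a` (injectivity), and `x` must be hit from `x - a` (surjectivity). So the shift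
propagates in both directions along the multiples of `a`, which exhaust the group when `a`
generates it. Otherwise `σ` is the identity.
-/

namespace Equiv.Perm

variable {G : Type*} [AddCommGroup G] {a : G} {σ : Perm G}

theorem apply_add_eq_add_of_apply_eq_add (ha : a ≠ 0) (hσ : ∀ x, σ x = x ∨ σ x = x + a)
    {x : G} (hx : σ x = x + a) : σ (x + a) = x + a + a := by
  refine (hσ (x + a)).resolve_left fun hfix => ha ?_
  have : x + a = x := σ.injective (hfix.trans hx.symm)
  simpa using this

theorem apply_sub_eq_of_apply_eq_add (ha : a ≠ 0) (hσ : ∀ x, σ x = x ∨ σ x = x + a)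
    {x : G} (hx : σ x = x + a) : σ (x - a) = x := by
  obtain ⟨y, hy⟩ := σ.surjective x
  rcases hσ y with hfix | hshift
  · have : y = x := hfix.symm.trans hy
    subst this
    exact absurd (hx.symm.trans hy) (by simpa using ha)
  · have : y = x - a := by rw [eq_sub_iff_add_eq, ← hshift, hy]
    rwa [← this]

theorem apply_add_zsmul_eq_of_apply_eq_add (ha : a ≠ 0) (hσ : ∀ x, σ x = x ∨ σ x = x + a)
    {x : G} (hx : σ x = x + a) (n : ℤ) : σ (x + n • a) = x + n • a + a := by
  induction n using Int.induction_on with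
  | zero => simpa using hx
  | succ k ih =>
    simpa [add_zsmul, add_assoc] using apply_add_eq_add_of_apply_eq_add ha hσ ih
  | pred k ih =>
    have := apply_sub_eq_of_apply_eq_add ha hσ ih
    have hpred : x + (-(k : ℤ) - 1) • a = x + -(k : ℤ) • a - a := by
      rw [sub_zsmul, one_zsmul]; abel
    rw [hpred, this, sub_add_cancel]

theorem eq_refl_or_eq_addRight (ha : a ≠ 0) (hgen : AddSubgroup.zmultiples a = ⊤)
    (hσ : ∀ x, σ x = x ∨ σ x = x + a) : σ = Equiv.refl G ∨ σ = Equiv.addRight a := by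
  by_cases hfix : ∀ x, σ x = x
  · exact Or.inl (Equiv.ext hfix)
  obtain ⟨x, hx⟩ := not_forall.mp hfix
  refine Or.inr (Equiv.ext fun y => ?_)
  obtain ⟨n, hn⟩ := AddSubgroup.mem_zmultiples_iff.mp (hgen ▸ AddSubgroup.mem_top (y - x))
  have := apply_add_zsmul_eq_of_apply_eq_add ha hσ ((hσ x).resolve_left hx) n
  rwa [hn, add_sub_cancel] at this

theorem setOf_forall_apply_eq_or_eq_add (ha : a ≠ 0) (hgen : AddSubgroup.zmultiples a = ⊤) :
    {σ : Perm G | ∀ x, σ x = x ∨ σ x = x + a} = {Equiv.refl G, Equiv.addRight a} := by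
  ext σ
  refine ⟨eq_refl_or_eq_addRight ha hgen, ?_⟩
  rintro (rfl | rfl) x
  · exact Or.inl rfl
  · exact Or.inr rfl

theorem card_forall_apply_eq_or_eq_add (ha : a ≠ 0) (hgen : AddSubgroup.zmultiples a = ⊤) :
    Nat.card {σ : Perm G // ∀ x, σ x = x ∨ σ x = x + a} = 2 := by
  have hne : Equiv.refl G ≠ Equiv.addRight a := fun h => ha (by simpa using congr($h 0).symm)
  rw [← Set.ncard_pair hne, ← setOf_forall_apply_eq_or_eq_add ha hgen, ← Nat.card_coe_set_eq]
  rfl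

end Equiv.Perm

theorem ZMod.zmultiples_one (N : ℕ) : AddSubgroup.zmultiples (1 : ZMod N) = ⊤ :=
  eq_top_iff.mpr fun y _ => by
    obtain ⟨k, rfl⟩ := ZMod.intCast_surjective y
    exact AddSubgroup.intCast_mem_zmultiples_one k

theorem GHZ_digraph_two_directed_PMs_general (N : ℕ) (hN : 2 ≤ N) :
    {σ : Equiv.Perm (ZMod N) | ∀ i, σ i = i ∨ σ i = i + 1} =
      {Equiv.refl (ZMod N), Equiv.addRight (1 : ZMod N)} ∧
    Nat.card {σ : Equiv.Perm (ZMod N) // ∀ i, σ i = i ∨ σ i = i + 1} = 2 := by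
  have : Fact (1 < N) := ⟨hN⟩
  exact ⟨Equiv.Perm.setOf_forall_apply_eq_or_eq_add one_ne_zero (ZMod.zmultiples_one N),
    Equiv.Perm.card_forall_apply_eq_or_eq_add one_ne_zero (ZMod.zmultiples_one N)⟩

/-- (The GHZ sculpting digraph has exactly two directed perfect matchings.)
For `N ≥ 2`, the permutations `σ` of `ZMod N` with `σ i ∈ {i, i + 1}` for every `i`
are exactly the identity and the translation `i ↦ i + 1`; in particular there are
exactly `2` of them. -/
theorem GHZ_digraph_two_directed_PMs (N : ℕ) (hN : 2 ≤ N) [NeZero N] :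
    {σ : Equiv.Perm (ZMod N) | ∀ i, σ i = i ∨ σ i = i + 1} =
      {Equiv.refl (ZMod N), Equiv.addRight (1 : ZMod N)} ∧
    Nat.card {σ : Equiv.Perm (ZMod N) // ∀ i, σ i = i ∨ σ i = i + 1} = 2 :=
  GHZ_digraph_two_directed_PMs_general N hN
end
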